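/- arXiv:1010.3881 — 13 statements merged into one kernel-verified Lean document; each statement's English description precedes it below -/
import Mathlib

section
/- The determinant of the n×n matrix with (i,j)-entry C(2i, j) (binomial coefficient, rows and columns indexed 0 ≤ i,j ≤ n-1) equals 2^(n(n-1)/2). -/
open Polynomial Finset Matrix

noncomputable section

/-- The key identity: C(2i,j) = ∑_{k=0}^{i} C(i,k) * (if k ≤ j then C(k,j-k) * 2^(k-(j-k)) else 0). -/
lemma key_identity (i j : ℕ) :
    (((2 * i).choose j : ℤ)) =
      ∑ k ∈ Finset.range (i + 1),
        (i.choose k : ℤ) * (if k ≤ j then ((k.choose (j - k) : ℤ) * 2 ^ (k - (j - k))) else 0) := by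
  have h1 : ((X + 1 : ℤ[X]) ^ (2 * i)).coeff j = ((2 * i).choose j : ℤ) :=
    coeff_X_add_one_pow ℤ (2 * i) j
  have h2 : (X + 1 : ℤ[X]) ^ (2 * i) = ((X + C 2) * X + 1) ^ i := by
    rw [pow_mul]
    congr 1
    have h2' : (C 2 : ℤ[X]) = 2 := by norm_num
    rw [h2']
    ring
  have h3 : ((X + C 2) * X + 1 : ℤ[X]) ^ i =
      ∑ k ∈ Finset.range (i + 1), ((X + C 2) ^ k * X ^ k) * C (i.choose k : ℤ) := by
    rw [add_pow]
    congr 1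
    ext k
    rw [one_pow, mul_one, mul_pow]
    simp [C_eq_natCast]
  rw [h2, h3] at h1
  rw [← h1, finset_sum_coeff]
  congr 1
  ext k
  rw [coeff_mul_C, coeff_mul_X_pow', mul_comm]
  congr 1
  split_ifs with hk
  · rw [coeff_X_add_C_pow, mul_comm]
  · rfl

theorem det_choose_two_i_j (n : ℕ) :
    Matrix.det (Matrix.of fun i j : Fin n => ((2 * (i : ℕ)).choose (j : ℕ) : ℤ)) =
      2 ^ n.choose 2 := by
  set P : Matrix (Fin n) (Fin n) ℤ :=
    Matrix.of fun i k : Fin n => ((i : ℕ).choose (k : ℕ) : ℤ) with hP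
  set Q : Matrix (Fin n) (Fin n) ℤ :=
    Matrix.of fun k j : Fin n =>
      if (k : ℕ) ≤ (j : ℕ) then
        (((k : ℕ).choose ((j : ℕ) - (k : ℕ)) : ℤ) * 2 ^ ((k : ℕ) - ((j : ℕ) - (k : ℕ))))
      else 0 with hQ
  have hfac : Matrix.of (fun i j : Fin n => ((2 * (i : ℕ)).choose (j : ℕ) : ℤ)) = P * Q := by
    ext i j
    rw [Matrix.mul_apply]
    simp only [hP, hQ, Matrix.of_apply]
    rw [key_identity (i : ℕ) (j : ℕ)]
    rw [Fin.sum_univ_eq_sum_range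
      (fun k => ((i : ℕ).choose k : ℤ) *
        (if k ≤ (j : ℕ) then (((k).choose ((j : ℕ) - k) : ℤ) * 2 ^ (k - ((j : ℕ) - k))) else 0)) n]
    rcases le_or_gt n ((i : ℕ) + 1) with h | h
    · rw [Finset.sum_subset (Finset.range_subset_range.2 h)]
      intro x _ hx
      simp only [Finset.mem_range, not_lt] at hx
      rw [Nat.choose_eq_zero_of_lt (by omega), Nat.cast_zero, zero_mul]
    · rw [← Finset.sum_subset (Finset.range_subset_range.2 h.le)]
      intro x _ hx
      simp only [Finset.mem_range, not_lt] at hx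
      rw [Nat.choose_eq_zero_of_lt (by omega), Nat.cast_zero, zero_mul]
  rw [hfac, Matrix.det_mul]
  have hPdet : P.det = 1 := by
    rw [Matrix.det_of_lowerTriangular P]
    · simp [hP]
    · intro i j hij
      simp only [hP, Matrix.of_apply]
      exact_mod_cast congrArg (Nat.cast : ℕ → ℤ)
        (Nat.choose_eq_zero_of_lt (show (i : ℕ) < (j : ℕ) from hij))
  have hQdet : Q.det = 2 ^ n.choose 2 := by
    rw [Matrix.det_of_upperTriangular]
    · have : ∀ k : Fin n, Q k k = 2 ^ (k : ℕ) := by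
        intro k
        simp [hQ]
      rw [Finset.prod_congr rfl fun k _ => this k]
      rw [Finset.prod_pow_eq_pow_sum]
      congr 1
      rw [Fin.sum_univ_eq_sum_range (fun k => k) n, Finset.sum_range_id,
        Nat.choose_two_right]
    · intro i j hij
      simp only [hQ, Matrix.of_apply]
      have hij' : (j : ℕ) < (i : ℕ) := hij
      rw [if_neg (not_le.mpr hij')]
  rw [hPdet, hQdet, one_mul]

end
end

section
/- For any positive integer r, the determinant of the n×n matrix with (i,j)-entry C(r·i, j) equals r^(n(n-1)/2). -/
/-!
Scaling the columns by `j!` turns `C(m, j)` into the falling factorial `m (m-1) ⋯ (m-j+1)`, a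
monic polynomial of degree `j` in `m`, so the determinant becomes the Vandermonde determinant of
the nodes `r·i`. That determinant is `r ^ C(n, 2)` times the Vandermonde determinant of the nodes
`i`, and the latter equals `∏ j!` because the case `r = 1` is the unitriangular Pascal matrix.
-/

open Finset Matrix Nat

variable {R : Type*} [CommRing R] {n : ℕ}

theorem Matrix.det_vandermonde_const_mul (a : R) (v : Fin n → R) :
    (vandermonde fun i => a * v i).det = a ^ n.choose 2 * (vandermonde v).det := by
  have hcols : (vandermonde fun i => a * v i) =
      of fun i j : Fin n => a ^ (j : ℕ) * vandermonde v i j := by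
    ext i j
    simp only [vandermonde_apply, of_apply, mul_pow]
  have hexp : ∑ j : Fin n, (j : ℕ) = n.choose 2 := by
    rw [Fin.sum_univ_eq_sum_range (fun j => j), sum_range_id, Nat.choose_two_right]
  rw [hcols, det_mul_row, prod_pow_eq_pow_sum, hexp]

theorem Matrix.factorial_prod_mul_det_choose [IsDomain R] (m : Fin n → ℕ) :
    (∏ j : Fin n, ((j : ℕ)! : R)) * (of fun i j : Fin n => ((m i).choose j : R)).det =
      (vandermonde fun i => (m i : R)).det := by
  rw [det_eval_matrixOfPolynomials_eq_det_vandermonde _ (fun j => descPochhammer R j)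
    (fun j => descPochhammer_natDegree R j) (fun j => monic_descPochhammer R j), ← det_mul_row]
  congr 1
  ext i j
  simp only [of_apply, descPochhammer_eval_eq_descFactorial, descFactorial_eq_factorial_mul_choose,
    Nat.cast_mul]

theorem Matrix.det_pascal : (of fun i j : Fin n => ((i : ℕ).choose j : R)).det = 1 := by
  rw [det_of_isLowerTriangular _ fun i j hij => by
    rw [of_apply, choose_eq_zero_of_lt (show (i : ℕ) < j from hij), Nat.cast_zero]]
  simp

theorem det_choose_r_i_j_general (n r : ℕ) :
    Matrix.det (Matrix.of fun i j : Fin n => ((r * (i : ℕ)).choose (j : ℕ) : ℤ)) =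
      (r : ℤ) ^ n.choose 2 := by
  have hfact : (∏ j : Fin n, ((j : ℕ)! : ℤ)) ≠ 0 :=
    prod_ne_zero_iff.mpr fun j _ => by exact_mod_cast (j : ℕ).factorial_ne_zero
  have hnodes_id := factorial_prod_mul_det_choose (R := ℤ) fun i : Fin n => (i : ℕ)
  rw [det_pascal, mul_one] at hnodes_id
  apply mul_left_cancel₀ hfact
  calc (∏ j : Fin n, ((j : ℕ)! : ℤ)) * (of fun i j : Fin n => ((r * (i : ℕ)).choose j : ℤ)).det
      = (vandermonde fun i : Fin n => (r : ℤ) * (i : ℕ)).det := by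
        simp only [factorial_prod_mul_det_choose, Nat.cast_mul]
    _ = (∏ j : Fin n, ((j : ℕ)! : ℤ)) * (r : ℤ) ^ n.choose 2 := by
        rw [det_vandermonde_const_mul, ← hnodes_id, mul_comm]

theorem det_choose_r_i_j (n r : ℕ) (hr : 0 < r) :
    Matrix.det (Matrix.of fun i j : Fin n => ((r * (i : ℕ)).choose (j : ℕ) : ℤ)) =
      (r : ℤ) ^ n.choose 2 :=
  det_choose_r_i_j_general n r
end

section
/- For any natural numbers r, x, y, the determinant of the n×n matrix with (i,j)-entry C(r·i+x, j+y) equals r^(n(n-1)/2) · ∏_{i=0}^{n-1} C(r·i+x, y) / C(i+y, y). -/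
/-!
Writing `C(a, j + y) = C(a, y) · C(a - y, j) / C(j + y, y)` pulls a factor `C(r i + x, y)` out of
row `i` and a factor `1 / C(j + y, y)` out of column `j`, leaving the matrix `(C(r i + d, j))` with
`d = x - y` (when `x < y`, the row `i = 0` vanishes on both sides). Since `j! · C(a, j)` is the
falling factorial, a monic polynomial of degree `j` in `a`, the determinant of `(j! · C(a_i, j))`
equals the Vandermonde determinant of the `a_i`. The Vandermonde determinant of the arithmetic
progression `r i + d` is `r ^ C(n, 2)` times that of `0, 1, …, n - 1`, which is `∏ j!` by the
same argument applied to the unitriangular matrix `(C(i, j))`.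
-/

open Finset Matrix Polynomial Nat

namespace Matrix

variable {R : Type*} [CommRing R] {n : ℕ}

theorem det_choose_self_left : (of fun i j : Fin n => ((i : ℕ).choose j : R)).det = 1 := by
  have htri : (of fun i j : Fin n => ((i : ℕ).choose j : R)).BlockTriangular OrderDual.toDual :=
    fun i j hij => by simp [Nat.choose_eq_zero_of_lt (show (i : ℕ) < j from hij)]
  simp [det_of_isLowerTriangular _ htri]

theorem det_vandermonde_const_mul_s2 (c : R) (v : Fin n → R) :
    (vandermonde fun i => c * v i).det = c ^ n.choose 2 * (vandermonde v).det := by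
  have hsum : ∑ j : Fin n, (j : ℕ) = n.choose 2 := by
    rw [Fin.sum_univ_eq_sum_range (fun j => j), sum_range_id, Nat.choose_two_right]
  rw [← hsum, ← prod_pow_eq_pow_sum, ← det_mul_row]
  congr with i j
  simp [vandermonde_apply, mul_pow]

theorem prod_factorial_mul_det_choose [IsDomain R] (a : Fin n → ℕ) :
    (∏ j : Fin n, ((j : ℕ)! : R)) * (of fun i j : Fin n => ((a i).choose j : R)).det =
      (vandermonde fun i => (a i : R)).det := by
  rw [det_eval_matrixOfPolynomials_eq_det_vandermonde _ (fun j => descPochhammer R j)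
    (fun j => descPochhammer_natDegree R j) (fun j => monic_descPochhammer R j),
    ← det_mul_row]
  congr with i j
  rw [of_apply, descPochhammer_eval_eq_descFactorial, Nat.descFactorial_eq_factorial_mul_choose,
    Nat.cast_mul]

theorem det_vandermonde_natCast [IsDomain R] :
    (vandermonde fun i : Fin n => ((i : ℕ) : R)).det = ∏ j : Fin n, ((j : ℕ)! : R) := by
  rw [← prod_factorial_mul_det_choose, det_choose_self_left, mul_one]

theorem det_choose_mul_add {K : Type*} [Field K] [CharZero K] (n r d : ℕ) :
    (of fun i j : Fin n => ((r * i + d).choose j : K)).det = (r : K) ^ n.choose 2 := by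
  have hfact : ∏ j : Fin n, ((j : ℕ)! : K) ≠ 0 :=
    prod_ne_zero_iff.2 fun j _ => Nat.cast_ne_zero.2 (factorial_ne_zero j)
  refine mul_left_cancel₀ hfact
    ((prod_factorial_mul_det_choose fun i : Fin n => r * i + d).trans ?_)
  push_cast
  rw [det_vandermonde_add, det_vandermonde_const_mul_s2, det_vandermonde_natCast, mul_comm]

end Matrix

theorem Nat.cast_choose_add_right {K : Type*} [Field K] [CharZero K] (a j y : ℕ) :
    (a.choose (j + y) : K) = a.choose y * (a - y).choose j / (j + y).choose y := by
  have h := Nat.choose_mul (n := a) (Nat.le_add_left y j)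
  rw [Nat.add_sub_cancel] at h
  rw [eq_div_iff (Nat.cast_ne_zero.2 (Nat.choose_pos (Nat.le_add_left y j)).ne')]
  exact_mod_cast h

theorem det_choose_ri_add_x_j_add_y (n r x y : ℕ) :
    Matrix.det (Matrix.of fun i j : Fin n =>
        ((r * (i : ℕ) + x).choose ((j : ℕ) + y) : ℚ)) =
      (r : ℚ) ^ n.choose 2 *
        ∏ i ∈ Finset.range n, ((r * i + x).choose y : ℚ) / ((i + y).choose y : ℚ) := by
  have hfactor : (of fun i j : Fin n => ((r * (i : ℕ) + x).choose ((j : ℕ) + y) : ℚ)).det =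
      (∏ i : Fin n, ((r * i + x).choose y : ℚ)) *
        ((∏ j : Fin n, (((j : ℕ) + y).choose y : ℚ)⁻¹) *
          (of fun i j : Fin n => ((r * i + x - y).choose j : ℚ)).det) := by
    rw [← det_mul_row, ← det_mul_column]
    congr with i j
    simp only [of_apply, Nat.cast_choose_add_right, div_eq_mul_inv]
    ring
  rw [hfactor, prod_div_distrib,
    ← Fin.prod_univ_eq_prod_range (fun i => ((r * i + x).choose y : ℚ)),
    ← Fin.prod_univ_eq_prod_range (fun i => ((i + y).choose y : ℚ)), div_eq_mul_inv,
    ← prod_inv_distrib]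
  obtain hyx | hxy := le_or_gt y x
  · simp_rw [Nat.add_sub_assoc hyx, det_choose_mul_add]
    ring
  obtain rfl | hn := n.eq_zero_or_pos
  · simp
  have hrow0 : ∏ i : Fin n, ((r * i + x).choose y : ℚ) = 0 :=
    prod_eq_zero (mem_univ ⟨0, hn⟩) (by simp [Nat.choose_eq_zero_of_lt hxy])
  simp [hrow0]
end

section
/- For any natural numbers a, b, c with c ≥ 1, the determinant of the c×c matrix with (i,j)-entry C(i+j+a+b, i+a) equals ∏_{k=0}^{c-1} ∏_{j=0}^{b-1} ∏_{i=0}^{a-1} (i+j+k+2)/(i+j+k+1). -/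
/-!
Writing `s = a + b + i`, the entry is
`C(s + j, i + a) = s! / (i + a)! · 1 / (j + b)! · (s + 1)(s + 2)⋯(s + j)`.
The first factor depends only on the row and the second only on the column, so they come out of
the determinant. The last factor is the rising factorial `(ascPochhammer j).eval (s + 1)`, a monic
polynomial of degree `j` evaluated at `s + 1`, so what remains is a Vandermonde determinant at the
consecutive nodes `a + b + 1 + i`, which is `∏ k!`. On the other side, the product over `i`
telescopes to `(a + j + k + 1) / (j + k + 1)` and then the product over `j` telescopes to
`(a + b + k)! k! / ((a + k)! (b + k)!)`, which is the factor contributed by row `k`.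
-/

open Finset Polynomial Nat

theorem Finset.prod_range_div_of_ne_zero {G₀ : Type*} [CommGroupWithZero G₀] (f : ℕ → G₀)
    (hf : ∀ i, f i ≠ 0) (n : ℕ) : ∏ i ∈ range n, f (i + 1) / f i = f n / f 0 := by
  induction n with
  | zero => simp [div_self (hf 0)]
  | succ n ih => rw [prod_range_succ, ih, mul_comm, div_mul_div_cancel₀ (hf n)]

theorem Nat.cast_choose_add_add_eq_mul_ascPochhammer (K : Type*) [Field K] [CharZero K]
    (m n j : ℕ) :
    ((m + n + j).choose m : K) =
      (m + n)! / m ! * (((n + j)! : K)⁻¹ * (ascPochhammer K j).eval ((m + n + 1 : ℕ) : K)) := by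
  rw [← Nat.cast_ascFactorial, Nat.cast_choose K (by omega : m ≤ m + n + j),
    show m + n + j - m = n + j by omega, ← Nat.factorial_mul_ascFactorial]
  push_cast
  field_simp

theorem Matrix.det_of_mul_mul {n R : Type*} [Fintype n] [DecidableEq n] [CommRing R]
    (u v : n → R) (A : n → n → R) :
    (Matrix.of fun i j => u i * (v j * A i j)).det =
      (∏ i, u i) * (∏ j, v j) * (Matrix.of A).det := by
  rw [mul_assoc, ← det_mul_row v (Matrix.of A)]
  exact det_mul_column u _

theorem Matrix.det_eval_ascPochhammer_add_nat {R : Type*} [CommRing R] [IsDomain R] (x : R)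
    (n : ℕ) :
    (Matrix.of fun i j : Fin n => (ascPochhammer R j).eval (x + i)).det =
      ∏ k ∈ range n, (k ! : R) := by
  rw [← det_eval_matrixOfPolynomials_eq_det_vandermonde (fun i : Fin n => x + i)
    (fun j => ascPochhammer R j) (fun j => ascPochhammer_natDegree R j)
    (fun j => monic_ascPochhammer R j)]
  simp_rw [add_comm x]
  rw [det_vandermonde_add]
  cases n with
  | zero => simp
  | succ n => rw [det_vandermonde_id_eq_superFactorial, ← prod_range_succ_factorial]; push_cast; rfl

theorem prod_range_prod_range_add_two_div_add_one (K : Type*) [Field K] [CharZero K]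
    (a b k : ℕ) :
    ∏ j ∈ range b, ∏ i ∈ range a, ((i + j + k + 2 : K) / (i + j + k + 1)) =
      (a + b + k)! * k ! / ((a + k)! * (b + k)!) := by
  have inner (j : ℕ) :
      ∏ i ∈ range a, ((i + j + k + 2 : K) / (i + j + k + 1)) = (a + j + k + 1) / (j + k + 1) := by
    have := prod_range_div_of_ne_zero (fun i => (i + j + k + 1 : K))
      (fun i => mod_cast (i + j + k).succ_ne_zero) a
    push_cast at this
    convert this using 2 <;> ring
  have hfact (n : ℕ) : (n ! : K) ≠ 0 := Nat.cast_ne_zero.mpr n.factorial_ne_zero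
  set f : ℕ → K := fun j => (a + j + k)! / (j + k)!
  have ratio (j : ℕ) : (a + j + k + 1 : K) / (j + k + 1) = f (j + 1) / f j := by
    simp only [f, show a + (j + 1) + k = a + j + k + 1 by ring, show j + 1 + k = j + k + 1 by ring,
      Nat.factorial_succ]
    have : (j + k + 1 : K) ≠ 0 := mod_cast (j + k).succ_ne_zero
    push_cast
    field_simp [hfact]
  rw [prod_congr rfl fun j _ => (inner j).trans (ratio j), prod_range_div_of_ne_zero f
    (fun j => div_ne_zero (hfact _) (hfact _))]
  simp only [f, zero_add, add_zero]
  field_simp [hfact]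

theorem det_macmahon_box_general (a b c : ℕ) :
    Matrix.det (Matrix.of fun i j : Fin c =>
        (((i : ℕ) + (j : ℕ) + a + b).choose ((i : ℕ) + a) : ℚ)) =
      ∏ k ∈ Finset.range c, ∏ j ∈ Finset.range b, ∏ i ∈ Finset.range a,
        ((i + j + k + 2 : ℚ) / (i + j + k + 1 : ℚ)) := by
  have hfactor : (Matrix.of fun i j : Fin c =>
      (((i : ℕ) + (j : ℕ) + a + b).choose ((i : ℕ) + a) : ℚ)) =
      Matrix.of fun i j : Fin c => ((a + b + i)! / (i + a)! : ℚ) *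
        (((j + b)! : ℚ)⁻¹ * (ascPochhammer ℚ j).eval ((a + b + 1 : ℚ) + (i : ℕ))) := by
    ext i j
    rw [Matrix.of_apply, Matrix.of_apply, show (i : ℕ) + j + a + b = i + a + b + j by ring,
      Nat.cast_choose_add_add_eq_mul_ascPochhammer]
    push_cast
    ring_nf
  rw [hfactor, Matrix.det_of_mul_mul (fun i : Fin c => ((a + b + i)! / (i + a)! : ℚ))
      (fun j : Fin c => ((j + b)! : ℚ)⁻¹)
      (fun i j : Fin c => (ascPochhammer ℚ j).eval ((a + b + 1 : ℚ) + (i : ℕ))),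
    Matrix.det_eval_ascPochhammer_add_nat,
    Fin.prod_univ_eq_prod_range (fun i => ((a + b + i)! / (i + a)! : ℚ)),
    Fin.prod_univ_eq_prod_range (fun j => ((j + b)! : ℚ)⁻¹), ← prod_mul_distrib,
    ← prod_mul_distrib]
  refine prod_congr rfl fun k _ => ?_
  rw [prod_range_prod_range_add_two_div_add_one, add_comm k a, add_comm k b]
  field_simp

theorem det_macmahon_box (a b c : ℕ) (hc : 1 ≤ c) :
    Matrix.det (Matrix.of fun i j : Fin c =>
        (((i : ℕ) + (j : ℕ) + a + b).choose ((i : ℕ) + a) : ℚ)) =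
      ∏ k ∈ Finset.range c, ∏ j ∈ Finset.range b, ∏ i ∈ Finset.range a,
        ((i + j + k + 2 : ℚ) / (i + j + k + 1 : ℚ)) :=
  det_macmahon_box_general a b c
end

section
/- The coefficient of the monomial (x_0 x_1 ··· x_{n-1})^{n-1} in the square of the Vandermonde product ∏_{0 ≤ i < j ≤ n-1} (x_j − x_i) equals (−1)^(n(n-1)/2) · n!. -/
/-!
Expanding the Vandermonde determinant gives `V = ∑_σ sign σ · ∏_i X_{σ i}^i`, a signed sum of
`n!` distinct monomials. In `V²` the monomial `(X_0 ⋯ X_{n-1})^{n-1}` arises exactly from the pairs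
`(σ, σ ∘ rev)`, where `rev i = n - 1 - i`, each contributing `sign σ · sign (σ ∘ rev) = sign rev`.
Since `rev` inverts all `n.choose 2` pairs, `sign rev = (-1)^(n.choose 2)`.
-/

open Equiv Equiv.Perm Finset MvPolynomial

theorem sign_revPerm (n : ℕ) : sign (Fin.revPerm : Perm (Fin n)) = (-1) ^ n.choose 2 := by
  have hinv : ∀ j : Fin n, ∀ i ∈ Iio j,
      (if Fin.revPerm i < Fin.revPerm j then 1 else -1 : ℤˣ) = -1 :=
    fun j i hi => if_neg (by simpa using (mem_Iio.mp hi).le)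
  rw [sign_eq_prod_prod_Iio, prod_congr rfl fun j _ => prod_congr rfl (hinv j)]
  simp only [prod_const, Fin.card_Iio, prod_pow_eq_pow_sum,
    Fin.sum_univ_eq_sum_range (fun i => i), sum_range_id, Nat.choose_two_right]

noncomputable def permExponent {n : ℕ} (σ : Perm (Fin n)) : Fin n →₀ ℕ :=
  Finsupp.equivFunOnFinite.symm fun k => (σ.symm k : ℕ)

section

variable {n : ℕ}

theorem permExponent_add_eq_const_iff (σ τ : Perm (Fin n)) :
    permExponent σ + permExponent τ = Finsupp.equivFunOnFinite.symm (fun _ => n - 1) ↔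
      τ = σ * Fin.revPerm := by
  have hrev : ∀ k, (σ.symm k : ℕ) + τ.symm k = n - 1 ↔ τ.symm k = Fin.rev (σ.symm k) :=
    fun k => by
      rw [Fin.ext_iff, Fin.val_rev]
      omega
  simp only [Finsupp.ext_iff, Finsupp.add_apply, permExponent,
    Finsupp.equivFunOnFinite_symm_apply_apply, hrev,
    ← Equiv.symm_bijective.injective.eq_iff (a := τ)]
  exact (Equiv.ext_iff (f := τ.symm) (g := (σ * Fin.revPerm).symm)).symm

variable {R : Type*} [CommRing R]

theorem prod_X_pow_perm_eq_monomial (σ : Perm (Fin n)) :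
    ∏ i, (X (σ i) : MvPolynomial (Fin n) R) ^ (i : ℕ) = monomial (permExponent σ) 1 := by
  rw [monomial_eq, C_1, one_mul, Finsupp.prod_fintype _ _ fun _ => pow_zero _]
  conv_rhs => rw [← Equiv.prod_comp σ]
  simp [permExponent]

theorem prod_lt_X_sub_X_eq_det_vandermonde :
    ∏ p ∈ univ.filter (fun p : Fin n × Fin n => p.1 < p.2),
        (X p.2 - X p.1 : MvPolynomial (Fin n) R) =
      (Matrix.vandermonde X).det := by
  rw [Matrix.det_vandermonde, prod_filter, Fintype.prod_prod_type]
  refine prod_congr rfl fun i _ => ?_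
  rw [← prod_filter]
  congr 1
  ext
  simp

theorem prod_lt_X_sub_X_eq_sum_sign_monomial :
    ∏ p ∈ univ.filter (fun p : Fin n × Fin n => p.1 < p.2),
        (X p.2 - X p.1 : MvPolynomial (Fin n) R) =
      ∑ σ : Perm (Fin n), sign σ • monomial (permExponent σ) (1 : R) := by
  simp_rw [prod_lt_X_sub_X_eq_det_vandermonde, Matrix.det_apply, Matrix.vandermonde_apply,
    prod_X_pow_perm_eq_monomial]

theorem coeff_const_sq_sum_sign_monomial_permExponent :
    coeff (Finsupp.equivFunOnFinite.symm fun _ : Fin n => n - 1)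
        ((∑ σ : Perm (Fin n), sign σ • monomial (permExponent σ) (1 : R)) ^ 2) =
      sign (Fin.revPerm : Perm (Fin n)) • (n.factorial : R) := by
  rw [sq, sum_mul_sum]
  simp_rw [coeff_sum, smul_mul_smul_comm, monomial_mul, mul_one, coeff_smul, coeff_monomial,
    permExponent_add_eq_const_iff, smul_ite, smul_zero, sum_ite_eq', mem_univ, if_true,
    Perm.sign_mul, ← mul_assoc, Int.units_mul_self, one_mul]
  rw [sum_const, card_univ, Fintype.card_perm, Fintype.card_fin, smul_comm, nsmul_eq_mul, mul_one]

end

theorem coeff_vandermonde_sq (n : ℕ) :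
    MvPolynomial.coeff (Finsupp.equivFunOnFinite.symm fun _ : Fin n => n - 1)
        ((∏ p ∈ Finset.univ.filter (fun p : Fin n × Fin n => p.1 < p.2),
            (MvPolynomial.X p.2 - MvPolynomial.X p.1 : MvPolynomial (Fin n) ℤ)) ^ 2) =
      (-1) ^ n.choose 2 * (n.factorial : ℤ) := by
  rw [prod_lt_X_sub_X_eq_sum_sign_monomial, coeff_const_sq_sum_sign_monomial_permExponent,
    sign_revPerm, Units.smul_def]
  push_cast
  rfl
end

section
/- The constant term (coefficient of x_0^0 ··· x_{n-1}^0) in the Laurent polynomial ∏_{i ≠ j} (1 − x_i/x_j) equals n!. -/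
/-!
Splitting the pairs `i ≠ j` into `i < j` and `i > j` factors `∏_{i ≠ j} (x_j - x_i)` as
`V(x) · V(x ∘ rev)`, where `V(v) = ∏_{i < j} (v_j - v_i)` is the Vandermonde determinant and `rev`
reverses `Fin n`. By Leibniz, the `σ`-term of `V(x)` is `± ∏_i x_{σ i}^i` and the `τ`-term of
`V(x ∘ rev)` is `± ∏_i x_{rev (τ i)}^i`. Their product is `∏_k x_k^{n-1}` exactly when
`τ = rev σ rev`, and then the two signs agree, so each of the `n!` permutations `σ` contributes `1`.
-/

open MvPolynomial Finset Matrix Equiv Nat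

section IncreasingPairs

variable {α M : Type*} [Fintype α] [LinearOrder α] [LocallyFiniteOrderTop α]
  [LocallyFiniteOrderBot α] [CommMonoid M]

theorem prod_Iio_comm (f : α → α → M) : ∏ i, ∏ j ∈ Iio i, f i j = ∏ j, ∏ i ∈ Ioi j, f i j :=
  prod_comm' fun i j => by simp

theorem prod_filter_ne_eq_prod_Ioi_mul (f : α → α → M) :
    ∏ p ∈ univ.filter (fun p : α × α => p.1 ≠ p.2), f p.1 p.2
      = ∏ i, ∏ j ∈ Ioi i, f i j * f j i := by
  have hsplit : ∀ i j, (if i ≠ j then f i j else 1)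
      = (if i < j then f i j else 1) * (if j < i then f i j else 1) := fun i j => by
    rcases lt_trichotomy i j with hij | rfl | hij
    · simp [hij, hij.ne, hij.not_gt]
    · simp
    · simp [hij, hij.ne', hij.not_gt]
  rw [prod_filter, Fintype.prod_prod_type]
  simp only [hsplit, prod_mul_distrib]
  simp only [← prod_filter, filter_lt_eq_Ioi, filter_gt_eq_Iio, prod_Iio_comm]

end IncreasingPairs

theorem Fin.prod_Ioi_rev {M : Type*} [CommMonoid M] {n : ℕ} (f : Fin n → Fin n → M) :
    ∏ i, ∏ j ∈ Ioi i, f (Fin.rev j) (Fin.rev i) = ∏ i, ∏ j ∈ Ioi i, f i j := by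
  calc ∏ i, ∏ j ∈ Ioi i, f (Fin.rev j) (Fin.rev i)
      = ∏ i, ∏ j ∈ Iio (Fin.rev i), f j (Fin.rev i) := by
        simp only [← Fin.map_revPerm_Ioi, prod_map]; rfl
    _ = ∏ i, ∏ j ∈ Iio i, f j i := Equiv.prod_comp Fin.revPerm fun i => ∏ j ∈ Iio i, f j i
    _ = ∏ i, ∏ j ∈ Ioi i, f i j := prod_Iio_comm fun i j => f j i

theorem prod_filter_ne_sub_eq_det_vandermonde_mul {R : Type*} [CommRing R] {n : ℕ}
    (v : Fin n → R) :
    ∏ p ∈ univ.filter (fun p : Fin n × Fin n => p.1 ≠ p.2), (v p.2 - v p.1)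
      = det (vandermonde v) * det (vandermonde (v ∘ Fin.rev)) := by
  simp only [prod_filter_ne_eq_prod_Ioi_mul fun i j => v j - v i, prod_mul_distrib]
  rw [det_vandermonde, det_vandermonde, ← Fin.prod_Ioi_rev fun i j => v i - v j]
  rfl

section LeibnizExpansion

variable {R : Type*} [CommRing R] {n : ℕ}

noncomputable def vandermondeExponent (σ : Perm (Fin n)) : Fin n →₀ ℕ :=
  Finsupp.equivFunOnFinite.symm fun k => (σ.symm k : ℕ)

theorem prod_X_apply_pow_eq_monomial (σ : Perm (Fin n)) :
    ∏ i, (X (σ i) : MvPolynomial (Fin n) R) ^ (i : ℕ) = monomial (vandermondeExponent σ) 1 := by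
  rw [monomial_eq, C_1, one_mul, Finsupp.prod_fintype _ _ fun _ => pow_zero _,
    ← Equiv.prod_comp σ fun k => (X k : MvPolynomial (Fin n) R) ^ vandermondeExponent σ k]
  simp [vandermondeExponent]

theorem det_vandermonde_X_comp (e : Perm (Fin n)) :
    det (vandermonde ((X : Fin n → MvPolynomial (Fin n) R) ∘ e))
      = ∑ σ : Perm (Fin n), monomial (vandermondeExponent (e * σ)) ((Perm.sign σ : ℤ) : R) := by
  rw [det_apply]
  refine sum_congr rfl fun σ _ => ?_
  rw [← Int.smul_one_eq_cast, ← smul_monomial, ← prod_X_apply_pow_eq_monomial, Units.smul_def]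
  rfl

theorem vandermondeExponent_add_eq_const_iff (σ π : Perm (Fin n)) :
    vandermondeExponent σ + vandermondeExponent π = Finsupp.equivFunOnFinite.symm (fun _ => n - 1)
      ↔ π = σ * Fin.revPerm := by
  calc _ ↔ ∀ k, (σ.symm k : ℕ) + π.symm k = n - 1 := by
        simp [Finsupp.ext_iff, vandermondeExponent]
    _ ↔ ∀ k, π.symm k = Fin.rev (σ.symm k) :=
        forall_congr' fun k => by rw [Fin.ext_iff, Fin.val_rev]; omega
    _ ↔ π = σ * Fin.revPerm := by
        rw [← _root_.inv_inj, _root_.mul_inv_rev, Perm.ext_iff]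
        simp [Perm.inv_def]

theorem coeff_sum_monomial_mul_sum_monomial {σ ι κ : Type*} [DecidableEq σ]
    (s : Finset ι) (t : Finset κ)
    (a : ι → σ →₀ ℕ) (b : κ → σ →₀ ℕ) (c : ι → R) (d : κ → R) (m : σ →₀ ℕ) :
    coeff m ((∑ i ∈ s, monomial (a i) (c i)) * ∑ j ∈ t, monomial (b j) (d j))
      = ∑ i ∈ s, ∑ j ∈ t, if a i + b j = m then c i * d j else 0 := by
  simp [sum_mul_sum, coeff_sum, monomial_mul, coeff_monomial]

theorem coeff_det_vandermonde_X_mul_det_vandermonde_X_rev :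
    coeff (Finsupp.equivFunOnFinite.symm fun _ : Fin n => n - 1)
        (det (vandermonde (X : Fin n → MvPolynomial (Fin n) R))
          * det (vandermonde ((X : Fin n → MvPolynomial (Fin n) R) ∘ Fin.rev))) = n ! := by
  have hX : det (vandermonde (X : Fin n → MvPolynomial (Fin n) R))
      = ∑ σ : Perm (Fin n), monomial (vandermondeExponent σ) ((Perm.sign σ : ℤ) : R) := by
    simpa using det_vandermonde_X_comp (R := R) 1
  have hX_rev : det (vandermonde ((X : Fin n → MvPolynomial (Fin n) R) ∘ Fin.rev))
      = ∑ τ : Perm (Fin n),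
          monomial (vandermondeExponent (Fin.revPerm * τ)) ((Perm.sign τ : ℤ) : R) :=
    det_vandermonde_X_comp Fin.revPerm
  have h_match (σ τ : Perm (Fin n)) :
      Fin.revPerm * τ = σ * Fin.revPerm ↔ τ = Fin.revPerm * σ * Fin.revPerm := by
    rw [mul_assoc, eq_comm, ← inv_mul_eq_iff_eq_mul, eq_comm]
    simp [Perm.inv_def]
  have h_sign (σ : Perm (Fin n)) : Perm.sign (Fin.revPerm * σ * Fin.revPerm) = Perm.sign σ := by
    rw [map_mul, map_mul, mul_right_comm, Int.units_mul_self, one_mul]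
  rw [hX, hX_rev, coeff_sum_monomial_mul_sum_monomial]
  simp only [vandermondeExponent_add_eq_const_iff, h_match, sum_ite_eq', mem_univ, if_true, h_sign]
  simp [← Int.cast_mul, Int.units_coe_mul_self, Fintype.card_perm]

end LeibnizExpansion

/-- The constant term of the Laurent polynomial `∏_{i ≠ j} (1 - x_i / x_j)` equals `n!`.
Multiplying through by `∏_j x_j^{n-1}` (each index `j` occurs `n-1` times as a denominator),
this constant term is the coefficient of the monomial `∏_j x_j^{n-1}` in the polynomial
`∏_{i ≠ j} (x_j - x_i)`. -/
theorem dyson_equal_parameters (n : ℕ) :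
    MvPolynomial.coeff (Finsupp.equivFunOnFinite.symm fun _ : Fin n => n - 1)
        (∏ p ∈ Finset.univ.filter (fun p : Fin n × Fin n => p.1 ≠ p.2),
          (MvPolynomial.X p.2 - MvPolynomial.X p.1 : MvPolynomial (Fin n) ℤ)) =
      (n.factorial : ℤ) := by
  rw [prod_filter_ne_sub_eq_det_vandermonde_mul, coeff_det_vandermonde_X_mul_det_vandermonde_X_rev]
end

section
/- The determinant of the n×n matrix with (i,j)-entry (i+j)! equals ∏_{i=0}^{n-1} (i!)^2, i.e., the square of the superfactorial (n-1)!! = 1!·2!···(n-1)!. -/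
open Matrix Finset

lemma choose_sum_eq (n i j : ℕ) (hi : i < n) :
    ∑ k ∈ range n, i.choose k * j.choose k = (i + j).choose i := by
  rw [Nat.add_choose_eq, Finset.Nat.sum_antidiagonal_eq_sum_range_succ_mk]
  have h1 : ∑ k ∈ range n, i.choose k * j.choose k
      = ∑ k ∈ range (i + 1), i.choose k * j.choose k := by
    symm
    apply Finset.sum_subset
    · exact Finset.range_subset_range.2 hi
    · intro k _ hk
      have : i < k := by simpa using hk
      simp [Nat.choose_eq_zero_of_lt this]
  rw [h1, ← Finset.sum_range_reflect]
  apply Finset.sum_congr rfl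
  intro k hk
  have hk' : k ≤ i := by simpa [Nat.lt_succ_iff] using hk
  have h2 : i + 1 - 1 - k = i - k := by omega
  rw [h2, Nat.choose_symm hk']

theorem det_factorial_matrix (n : ℕ) :
    Matrix.det (Matrix.of fun i j : Fin n => (((i : ℕ) + (j : ℕ)).factorial : ℤ)) =
      ∏ i ∈ Finset.range n, (i.factorial : ℤ) ^ 2 := by
  set D : Matrix (Fin n) (Fin n) ℤ :=
    Matrix.diagonal fun i : Fin n => ((i : ℕ).factorial : ℤ) with hD
  set L : Matrix (Fin n) (Fin n) ℤ :=
    Matrix.of fun i j : Fin n => (((i : ℕ).choose (j : ℕ) : ℕ) : ℤ) with hL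
  have key : (Matrix.of fun i j : Fin n => (((i : ℕ) + (j : ℕ)).factorial : ℤ))
      = D * L * Lᵀ * D := by
    ext i j
    have h2 : ∑ k : Fin n, (((i : ℕ).choose (k : ℕ) : ℤ) * ((j : ℕ).choose (k : ℕ) : ℤ))
        = (((i : ℕ) + (j : ℕ)).choose (i : ℕ) : ℤ) := by
      rw [Fin.sum_univ_eq_sum_range (fun k => (((i : ℕ).choose k : ℤ) * ((j : ℕ).choose k : ℤ)))]
      rw [← choose_sum_eq n i j i.isLt]
      push_cast
      rfl
    have hLL : (L * Lᵀ) i j = (((i : ℕ) + (j : ℕ)).choose (i : ℕ) : ℤ) := by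
      rw [Matrix.mul_apply, ← h2]
      exact Finset.sum_congr rfl fun k _ => rfl
    have h1 : (D * L * Lᵀ * D) i j
        = ((i : ℕ).factorial : ℤ) * (((i : ℕ) + (j : ℕ)).choose (i : ℕ) : ℤ) *
          ((j : ℕ).factorial : ℤ) := by
      have hassoc : D * L * Lᵀ * D = D * (L * Lᵀ) * D := by
        rw [Matrix.mul_assoc D L Lᵀ]
      rw [hassoc, hD, Matrix.mul_diagonal, Matrix.diagonal_mul, hLL]
    rw [h1, Matrix.of_apply]
    rw [← Nat.choose_mul_factorial_mul_factorial (Nat.le_add_right (i : ℕ) (j : ℕ))]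
    push_cast
    rw [Nat.add_sub_cancel_left]
    ring
  rw [key]
  have hdetL : L.det = 1 := by
    rw [Matrix.det_of_lowerTriangular L]
    · simp [hL]
    · intro i j hij
      have : (i : ℕ) < (j : ℕ) := hij
      simp [hL, Nat.choose_eq_zero_of_lt this]
  have hdetD : D.det = ∏ i ∈ Finset.range n, (i.factorial : ℤ) := by
    rw [hD, Matrix.det_diagonal]
    exact Fin.prod_univ_eq_prod_range (fun k => ((k.factorial : ℤ))) n
  rw [Matrix.det_mul, Matrix.det_mul, Matrix.det_mul, Matrix.det_transpose,
    hdetL, hdetD]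
  simp [sq, Finset.prod_mul_distrib]
end

section
/- The Selberg-type integral ∫_{(0,∞)^n} e^{-(x_0+···+x_{n-1})} · (∏_{0≤i<j≤n-1}(x_j−x_i))^2 dx_0···dx_{n-1} equals (∏_{i=1}^{n} i!) · (∏_{i=1}^{n-1} i!). -/
/-!
Write the weight times the squared Vandermonde product as
`det (e^{-x_j} x_j^i) * det (x_j^i)`. By Andréief's identity, integrating a product of two such
determinants against a product measure gives `n!` times the determinant of the moment matrix
`(∫ e^{-t} t^{i+j} dt) = ((i+j)!)`. This Hankel matrix is `D P D` with `D = diag (i!)` and `P` the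
symmetric Pascal matrix `(C(i+j, j))`, and `P = L Lᵀ` for the unitriangular `L = (C(i, k))`,
so its determinant is `(∏_{i<n} i!)^2`.
-/

open MeasureTheory Finset Matrix Equiv Nat Real

theorem Nat.sum_range_choose_mul_choose (i j m : ℕ) (hj : j < m) :
    ∑ k ∈ range m, i.choose k * j.choose k = (i + j).choose j := by
  calc ∑ k ∈ range m, i.choose k * j.choose k
      = ∑ k ∈ range (j + 1), i.choose k * j.choose k :=
        (sum_subset (range_subset_range.2 hj) fun k _ hk => by
          simp [choose_eq_zero_of_lt (show j < k by simpa using hk)]).symm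
    _ = (i + j).choose j := by
        rw [add_choose_eq, Finset.Nat.sum_antidiagonal_eq_sum_range_succ_mk]
        refine sum_congr rfl fun k hk => ?_
        rw [choose_symm (mem_range_succ_iff.mp hk)]

theorem Nat.prod_fin_factorial (n : ℕ) : ∏ i : Fin n, (i : ℕ)! = sf (n - 1) := by
  cases n with
  | zero => rfl
  | succ m => rw [Fin.prod_univ_eq_prod_range (fun i => i !), prod_range_succ_factorial]; rfl

namespace Matrix

variable {ι R : Type*} [Fintype ι] [DecidableEq ι] [CommRing R]

theorem sum_sign_mul_sign_mul_prod_apply (G : Matrix ι ι R) :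
    ∑ σ : Perm ι, ∑ τ : Perm ι, ((Perm.sign σ : ℤ) : R) * (Perm.sign τ : ℤ) * ∏ j, G (σ j) (τ j) =
      ((Fintype.card ι)! : R) * G.det := by
  have hσ (σ : Perm ι) :
      ∑ τ : Perm ι, ((Perm.sign σ : ℤ) : R) * (Perm.sign τ : ℤ) * ∏ j, G (σ j) (τ j) = G.det := by
    have hrow : ∑ τ : Perm ι, ((Perm.sign τ : ℤ) : R) * ∏ j, G (σ j) (τ j) =
        ((Perm.sign σ : ℤ) : R) * G.det := by
      rw [← det_permute, ← det_transpose, det_apply']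
      rfl
    simp_rw [mul_assoc, ← mul_sum, hrow, ← mul_assoc, ← Int.cast_mul, ← Units.val_mul,
      Int.units_mul_self, Units.val_one, Int.cast_one, one_mul]
  simp_rw [hσ, sum_const, Finset.card_univ, Fintype.card_perm, nsmul_eq_mul]

theorem det_of_add_choose (n : ℕ) :
    det (of fun i j : Fin n => (((i + j : ℕ).choose j : ℕ) : R)) = 1 := by
  set L : Matrix (Fin n) (Fin n) R := of fun i k => ((i : ℕ).choose k : R)
  have hLLt : (of fun i j : Fin n => (((i + j : ℕ).choose j : ℕ) : R)) = L * Lᵀ := by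
    ext i j
    rw [of_apply, ← Nat.sum_range_choose_mul_choose i j n j.isLt, mul_apply, Nat.cast_sum,
      ← Fin.sum_univ_eq_sum_range]
    simp [L]
  have hL : L.det = 1 := by
    rw [det_of_isLowerTriangular L fun i k (hik : i < k) => by
      simp only [L, of_apply, choose_eq_zero_of_lt (Fin.lt_def.1 hik), Nat.cast_zero]]
    simp [L]
  rw [hLLt, det_mul, det_transpose, hL, one_mul]

theorem det_of_factorial_add (n : ℕ) :
    det (of fun i j : Fin n => (((i + j : ℕ)! : ℕ) : R)) = (∏ i : Fin n, ((i : ℕ)! : R)) ^ 2 := by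
  set D : Matrix (Fin n) (Fin n) R := diagonal fun i => ((i : ℕ)! : R)
  have hfactor : (of fun i j : Fin n => (((i + j : ℕ)! : ℕ) : R)) =
      D * (of fun i j : Fin n => (((i + j : ℕ).choose j : ℕ) : R)) * D := by
    ext i j
    rw [of_apply, mul_diagonal, diagonal_mul, of_apply, ← add_choose_mul_factorial_mul_factorial]
    push_cast
    ring
  rw [hfactor, det_mul, det_mul, det_diagonal, det_of_add_choose]
  ring

end Matrix

theorem Finset.prod_filter_lt_eq_prod_prod_Ioi {ι M : Type*} [Fintype ι] [LinearOrder ι]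
    [LocallyFiniteOrderTop ι] [CommMonoid M] (f : ι → ι → M) :
    ∏ p ∈ univ.filter (fun p : ι × ι => p.1 < p.2), f p.1 p.2 = ∏ i, ∏ j ∈ Ioi i, f i j := by
  rw [prod_filter, ← univ_product_univ, prod_product]
  refine prod_congr rfl fun i _ => ?_
  rw [← prod_filter]
  congr 1
  ext j
  simp

theorem exp_neg_sum_mul_prod_sub_sq {n : ℕ} (x : Fin n → ℝ) :
    exp (-(∑ i, x i)) *
        (∏ p ∈ univ.filter (fun p : Fin n × Fin n => p.1 < p.2), (x p.2 - x p.1)) ^ 2 =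
      det (of fun i j => exp (-x j) * x j ^ (i : ℕ)) * det (of fun i j => x j ^ (i : ℕ)) := by
  have hV : det (of fun i j : Fin n => x j ^ (i : ℕ)) =
      ∏ p ∈ univ.filter (fun p : Fin n × Fin n => p.1 < p.2), (x p.2 - x p.1) := by
    rw [prod_filter_lt_eq_prod_prod_Ioi (fun i j => x j - x i), ← det_vandermonde,
      ← det_transpose]
    rfl
  have hweight := det_mul_row (fun j => exp (-x j)) (of fun i j : Fin n => x j ^ (i : ℕ))
  simp only [of_apply] at hweight
  rw [hweight, hV, ← sum_neg_distrib, exp_sum]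
  ring

theorem integral_det_mul_det_pi {ι α 𝕜 : Type*} [Fintype ι] [DecidableEq ι] [RCLike 𝕜]
    [MeasurableSpace α] {μ : Measure α} [SigmaFinite μ] (f g : ι → α → 𝕜)
    (hfg : ∀ i j, Integrable (fun t => f i t * g j t) μ) :
    ∫ x : ι → α, det (of fun i j => f i (x j)) * det (of fun i j => g i (x j))
        ∂(Measure.pi fun _ => μ) =
      ((Fintype.card ι)! : 𝕜) * det (of fun i j => ∫ t, f i t * g j t ∂μ) := by
  have hexpand (x : ι → α) :
      det (of fun i j => f i (x j)) * det (of fun i j => g i (x j)) =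
        ∑ σ : Perm ι, ∑ τ : Perm ι, ((Perm.sign σ : ℤ) : 𝕜) * (Perm.sign τ : ℤ) *
          ∏ j, f (σ j) (x j) * g (τ j) (x j) := by
    rw [det_apply', det_apply', sum_mul_sum]
    refine sum_congr rfl fun σ _ => sum_congr rfl fun τ _ => ?_
    simp only [prod_mul_distrib, of_apply]
    ring
  have hint (σ τ : Perm ι) : Integrable (fun x : ι → α => ∏ j, f (σ j) (x j) * g (τ j) (x j))
      (Measure.pi fun _ => μ) :=
    Integrable.fintype_prod fun j => hfg (σ j) (τ j)
  simp_rw [hexpand]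
  rw [integral_finsetSum _ fun σ _ => integrable_finsetSum _ fun τ _ => (hint σ τ).const_mul _,
    ← sum_sign_mul_sign_mul_prod_apply]
  refine sum_congr rfl fun σ _ => ?_
  rw [integral_finsetSum _ fun τ _ => (hint σ τ).const_mul _]
  refine sum_congr rfl fun τ _ => ?_
  rw [integral_const_mul, integral_fintype_prod_eq_prod (fun j t => f (σ j) t * g (τ j) t)]
  rfl

theorem integrableOn_pow_mul_exp_neg_Ioi (a : ℕ) :
    IntegrableOn (fun x : ℝ => x ^ a * exp (-x)) (Set.Ioi 0) := by
  refine (GammaIntegral_convergent (s := (a : ℝ) + 1) (by positivity)).congr_fun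
    (fun x _ => ?_) measurableSet_Ioi
  simp only [add_sub_cancel_right, rpow_natCast]
  ring

theorem integral_pow_mul_exp_neg_Ioi (a : ℕ) :
    ∫ x in Set.Ioi (0 : ℝ), x ^ a * exp (-x) = a ! := by
  rw [← Real.Gamma_nat_eq_factorial, Gamma_eq_integral (by positivity)]
  refine setIntegral_congr_fun measurableSet_Ioi fun x _ => ?_
  simp only [add_sub_cancel_right, rpow_natCast]
  ring

theorem selberg_type_integral (n : ℕ) :
    ∫ x : Fin n → ℝ in {x : Fin n → ℝ | ∀ i, 0 < x i},
        Real.exp (-(∑ i, x i)) *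
          (∏ p ∈ Finset.univ.filter (fun p : Fin n × Fin n => p.1 < p.2),
            (x p.2 - x p.1)) ^ 2 =
      (∏ i ∈ Finset.Icc 1 n, (i.factorial : ℝ)) *
        (∏ i ∈ Finset.Icc 1 (n - 1), (i.factorial : ℝ)) := by
  have horthant : {x : Fin n → ℝ | ∀ i, 0 < x i} = Set.univ.pi fun _ => Set.Ioi 0 := by
    ext; simp
  have hmoment (i j : Fin n) :
      (fun t => exp (-t) * t ^ (i : ℕ) * t ^ (j : ℕ)) = fun t => t ^ (i + j : ℕ) * exp (-t) := by
    funext t; ring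
  simp_rw [exp_neg_sum_mul_prod_sub_sq]
  rw [horthant, volume_pi, Measure.restrict_pi_pi,
    integral_det_mul_det_pi (fun (i : Fin n) t => exp (-t) * t ^ (i : ℕ))
      (fun (i : Fin n) t => t ^ (i : ℕ))
      fun i j => by rw [hmoment]; exact integrableOn_pow_mul_exp_neg_Ioi _]
  simp_rw [hmoment, integral_pow_mul_exp_neg_Ioi, det_of_factorial_add, ← Nat.cast_prod,
    prod_Icc_factorial, prod_fin_factorial, Fintype.card_fin]
  norm_cast
  cases n with
  | zero => rfl
  | succ m => rw [Nat.add_sub_cancel, superFactorial_succ]; ring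
end

section
/- The determinant of the n×n matrix with (i,j)-entry C(2j+i, 2j−i) equals ∏_{i=0}^{n-1} (i!)^2·(4i)! / ((2i)!)^3. -/
/-!
Since `(x + i)(x - i + 1) = x(x + 1) - i(i - 1)`, pairing the factors of the falling factorial
gives `(2i)! · C(x + i, 2i) = ∏_{t < i} (x(x + 1) - t(t + 1))`, a monic polynomial of degree `i`
in `y = x(x + 1)`. The entry `C(2j + i, 2j - i)` is this with `x = 2j` (also when `i > 2j`, where
both sides vanish), so the matrix is a row-scaled Vandermonde matrix in the nodes
`y_j = 2j(2j + 1)`, and its determinant is `∏_i 1/(2i)! · ∏_{i < j} (y_j - y_i)`. Finally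
`y_j - y_i = 2(j - i)(2j + 2i + 1)`, and the product over `i < j` of these factors is
`j!² (4j)! / (2j)!²`.
-/

open Finset Polynomial
open scoped Nat

section Pronic

variable (R : Type*) [CommRing R]

noncomputable def pronicPoly (i : ℕ) : R[X] :=
  ∏ t ∈ range i, (X - C ((t : R) * (t + 1)))

variable {R}

theorem pronicPoly_monic (i : ℕ) : (pronicPoly R i).Monic :=
  monic_prod_of_monic _ _ fun _ _ => monic_X_sub_C _

theorem natDegree_pronicPoly [Nontrivial R] (i : ℕ) : (pronicPoly R i).natDegree = i := by
  rw [pronicPoly, natDegree_prod_of_monic _ _ fun _ _ => monic_X_sub_C _]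
  simp only [natDegree_X_sub_C, sum_const, card_range, smul_eq_mul, mul_one]

theorem eval_pronicPoly_mul_add_one (x i : ℕ) :
    (pronicPoly R i).eval ((x : R) * (x + 1)) = (x + i).descFactorial (2 * i) := by
  induction i with
  | zero => simp [pronicPoly]
  | succ i ih =>
    rw [pronicPoly, prod_range_succ, eval_mul, ← pronicPoly, ih,
      show 2 * (i + 1) = 2 * i + 1 + 1 by ring, ← add_assoc, Nat.succ_descFactorial_succ,
      Nat.descFactorial_succ]
    rcases lt_or_ge x i with hxi | hix
    · rw [Nat.descFactorial_eq_zero_iff_lt.mpr (by omega)]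
      simp
    · rw [show x + i - 2 * i = x - i by omega]
      push_cast [hix]
      simp only [eval_sub, eval_X, eval_C]
      ring

theorem cast_choose_two_mul_eq_eval_pronicPoly {K : Type*} [Field K] [CharZero K] (x i : ℕ) :
    ((x + i).choose (2 * i) : K) =
      (pronicPoly K i).eval ((x : K) * (x + 1)) / (2 * i)! := by
  rw [eval_pronicPoly_mul_add_one, Nat.descFactorial_eq_factorial_mul_choose, Nat.cast_mul,
    mul_div_cancel_left₀ _ (Nat.cast_ne_zero.mpr (Nat.factorial_ne_zero _))]

end Pronic

theorem Nat.ite_le_choose_add_sub (x i : ℕ) :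
    (if i ≤ x then (x + i).choose (x - i) else 0) = (x + i).choose (2 * i) := by
  split_ifs with h
  · exact choose_symm_of_eq_add (by omega)
  · exact (choose_eq_zero_of_lt (by omega)).symm

theorem Matrix.det_of_mul_eval_monic {R : Type*} [CommRing R] {n : ℕ} (c v : Fin n → R)
    (p : Fin n → R[X]) (h_deg : ∀ i, (p i).natDegree = i) (h_monic : ∀ i, (p i).Monic) :
    (Matrix.of fun i j => c i * (p i).eval (v j)).det =
      (∏ i, c i) * ∏ i : Fin n, ∏ j ∈ Ioi i, (v j - v i) := by
  rw [← det_vandermonde, det_eval_matrixOfPolynomials_eq_det_vandermonde v p h_deg h_monic,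
    ← det_transpose (of fun i j => (p j).eval (v i))]
  exact det_mul_column c (of fun i j => (p i).eval (v j))

theorem Fin.prod_univ_prod_Ioi_eq_prod_range_prod_range {M : Type*} [CommMonoid M] (n : ℕ)
    (f : ℕ → ℕ → M) :
    ∏ i : Fin n, ∏ j ∈ Ioi i, f i j = ∏ j ∈ range n, ∏ i ∈ range j, f i j := by
  rw [prod_comm' (t' := univ) (s' := fun j => Iio j) (by simp),
    ← Fin.prod_univ_eq_prod_range (fun j => ∏ i ∈ range j, f i j)]
  refine prod_congr rfl fun j _ => ?_
  rw [← Nat.Iio_eq_range, ← Fin.map_valEmbedding_Iio, prod_map]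
  rfl

theorem Finset.prod_range_two_mul {M : Type*} [CommMonoid M] (f : ℕ → M) (m : ℕ) :
    ∏ k ∈ range (2 * m), f k = ∏ i ∈ range m, (f (2 * i) * f (2 * i + 1)) := by
  induction m with
  | zero => simp
  | succ m ih => rw [show 2 * (m + 1) = 2 * m + 1 + 1 by ring, prod_range_succ, prod_range_succ,
      prod_range_succ, ih, mul_assoc]

theorem Nat.prod_range_two_mul_sub (j : ℕ) : ∏ i ∈ range j, 2 * (j - i) = 2 ^ j * j ! := by
  rw [← prod_range_reflect, prod_congr rfl fun i hi => by
      rw [show j - (j - 1 - i) = i + 1 by have := mem_range.mp hi; omega],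
    prod_mul_distrib, prod_const, card_range, prod_range_add_one_eq_factorial]

theorem Nat.factorial_sq_mul_two_pow_mul_prod_odd (j : ℕ) :
    (2 * j)! ^ 2 * 2 ^ j * ∏ i ∈ range j, (2 * (j + i) + 1) = (4 * j)! * j ! := by
  have hodd_even : (∏ i ∈ range j, (2 * (j + i) + 1)) * (2 ^ j * (j + 1).ascFactorial j) =
      (2 * j + 1).ascFactorial (2 * j) := by
    rw [ascFactorial_eq_prod_range, ascFactorial_eq_prod_range, prod_range_two_mul,
      ← card_range j, ← prod_const, card_range, ← prod_mul_distrib, ← prod_mul_distrib]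
    exact prod_congr rfl fun i _ => by ring
  have h2j : j ! * (j + 1).ascFactorial j = (2 * j)! := by
    rw [factorial_mul_ascFactorial, two_mul]
  have h4j : (2 * j)! * (2 * j + 1).ascFactorial (2 * j) = (4 * j)! := by
    rw [factorial_mul_ascFactorial]; ring_nf
  calc (2 * j)! ^ 2 * 2 ^ j * ∏ i ∈ range j, (2 * (j + i) + 1)
      = (2 * j)! * ((∏ i ∈ range j, (2 * (j + i) + 1)) * (2 ^ j * (j + 1).ascFactorial j))
          * j ! := by rw [← h2j]; ring
    _ = (4 * j)! * j ! := by rw [hodd_even, h4j]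

theorem Nat.factorial_sq_mul_prod_pronic_diff (j : ℕ) :
    (2 * j)! ^ 2 * ∏ i ∈ range j, 2 * (j - i) * (2 * (j + i) + 1) = j ! ^ 2 * (4 * j)! := by
  rw [prod_mul_distrib, prod_range_two_mul_sub]
  calc (2 * j)! ^ 2 * (2 ^ j * j ! * ∏ i ∈ range j, (2 * (j + i) + 1))
      = (2 * j)! ^ 2 * 2 ^ j * (∏ i ∈ range j, (2 * (j + i) + 1)) * j ! := by ring
    _ = j ! ^ 2 * (4 * j)! := by rw [factorial_sq_mul_two_pow_mul_prod_odd]; ring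

theorem inv_factorial_mul_prod_pronic_sub (j : ℕ) :
    ((2 * j)! : ℚ)⁻¹ * ∏ i ∈ range j,
      (((2 * j : ℕ) : ℚ) * ((2 * j : ℕ) + 1) - ((2 * i : ℕ) : ℚ) * ((2 * i : ℕ) + 1)) =
      (j ! : ℚ) ^ 2 * (4 * j)! / ((2 * j)! : ℚ) ^ 3 := by
  have hcast : ∏ i ∈ range j,
      (((2 * j : ℕ) : ℚ) * ((2 * j : ℕ) + 1) - ((2 * i : ℕ) : ℚ) * ((2 * i : ℕ) + 1)) =
      ((∏ i ∈ range j, 2 * (j - i) * (2 * (j + i) + 1) : ℕ) : ℚ) := by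
    push_cast
    refine prod_congr rfl fun i hi => ?_
    rw [Nat.cast_sub (mem_range.mp hi).le]
    ring
  rw [hcast]
  field_simp
  exact_mod_cast Nat.factorial_sq_mul_prod_pronic_diff j

theorem det_choose_2j_add_i_2j_sub_i (n : ℕ) :
    Matrix.det (Matrix.of fun i j : Fin n =>
        if (i : ℕ) ≤ 2 * (j : ℕ) then
          ((2 * (j : ℕ) + (i : ℕ)).choose (2 * (j : ℕ) - (i : ℕ)) : ℚ)
        else 0) =
      ∏ i ∈ Finset.range n,
        ((i.factorial : ℚ) ^ 2 * ((4 * i).factorial : ℚ) / ((2 * i).factorial : ℚ) ^ 3) := by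
  set v : ℕ → ℚ := fun j => ((2 * j : ℕ) : ℚ) * ((2 * j : ℕ) + 1)
  have hentry : (Matrix.of fun i j : Fin n =>
      if (i : ℕ) ≤ 2 * (j : ℕ) then
        ((2 * (j : ℕ) + (i : ℕ)).choose (2 * (j : ℕ) - (i : ℕ)) : ℚ) else 0) =
      Matrix.of fun i j : Fin n => ((2 * (i : ℕ))! : ℚ)⁻¹ * (pronicPoly ℚ i).eval (v j) := by
    ext i j
    have hchoose := congrArg (Nat.cast (R := ℚ)) (Nat.ite_le_choose_add_sub (2 * j) i)
    rw [Nat.cast_ite, Nat.cast_zero] at hchoose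
    rw [Matrix.of_apply, Matrix.of_apply, hchoose, cast_choose_two_mul_eq_eval_pronicPoly,
      div_eq_inv_mul]
  rw [hentry, Matrix.det_of_mul_eval_monic _ (fun j => v j) (fun i => pronicPoly ℚ i)
      (fun i => natDegree_pronicPoly _) (fun i => pronicPoly_monic _),
    Fin.prod_univ_eq_prod_range (fun i => ((2 * i)! : ℚ)⁻¹),
    Fin.prod_univ_prod_Ioi_eq_prod_range_prod_range n (fun i j => v j - v i),
    ← prod_mul_distrib]
  exact prod_congr rfl fun j _ => inv_factorial_mul_prod_pronic_sub j
end

section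
/- For natural numbers p, q and a ring element z, the determinant of the n×n matrix with (i,j)-entry ∑_{k=0}^{min(i,j)} C(p·i,k)·C(q·j,k)·z^k equals z^(n(n-1)/2) · ∏_{i=0}^{n-1} C(p·i,i)·C(q·i,i). -/
theorem det_delannoy_pi_qj_z {R : Type*} [CommRing R] (n p q : ℕ) (z : R) :
    Matrix.det (Matrix.of fun i j : Fin n =>
        ∑ k ∈ Finset.range (min (i : ℕ) (j : ℕ) + 1),
          ((p * (i : ℕ)).choose k : R) * ((q * (j : ℕ)).choose k : R) * z ^ k) =
      z ^ n.choose 2 *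
        ∏ i ∈ Finset.range n, ((p * i).choose i : R) * ((q * i).choose i : R) := by
  set A : Matrix (Fin n) (Fin n) R :=
    Matrix.of fun i k => if (k : ℕ) ≤ (i : ℕ) then ((p * (i : ℕ)).choose k : R) else 0 with hA
  set B : Matrix (Fin n) (Fin n) R :=
    Matrix.of fun j k => if (k : ℕ) ≤ (j : ℕ) then ((q * (j : ℕ)).choose k : R) else 0 with hB
  set D : Matrix (Fin n) (Fin n) R := Matrix.diagonal fun k : Fin n => z ^ (k : ℕ) with hD
  have hM : (Matrix.of fun i j : Fin n =>
        ∑ k ∈ Finset.range (min (i : ℕ) (j : ℕ) + 1),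
          ((p * (i : ℕ)).choose k : R) * ((q * (j : ℕ)).choose k : R) * z ^ k)
      = A * D * B.transpose := by
    ext i j
    have expand : (A * D * B.transpose) i j
        = ∑ k : Fin n,
            (if (k : ℕ) ≤ (i : ℕ) then ((p * (i : ℕ)).choose (k : ℕ) : R) else 0)
            * z ^ (k : ℕ)
            * (if (k : ℕ) ≤ (j : ℕ) then ((q * (j : ℕ)).choose (k : ℕ) : R) else 0) := by
      simp only [Matrix.mul_apply, Matrix.transpose_apply, hA, hB, hD, Matrix.of_apply,
        Matrix.diagonal_apply]
      apply Finset.sum_congr rfl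
      intro k _
      congr 1
      rw [Finset.sum_eq_single k]
      · simp
      · intro b _ hb; simp [hb]
      · simp
    rw [expand, Fin.sum_univ_eq_sum_range
      (fun k => (if k ≤ (i : ℕ) then ((p * (i : ℕ)).choose k : R) else 0)
        * z ^ k * (if k ≤ (j : ℕ) then ((q * (j : ℕ)).choose k : R) else 0)) n]
    have hsub : Finset.range (min (i : ℕ) (j : ℕ) + 1) ⊆ Finset.range n := by
      apply Finset.range_subset_range.mpr
      have := i.isLt
      omega
    rw [Matrix.of_apply]
    rw [← Finset.sum_subset hsub]
    · apply Finset.sum_congr rfl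
      intro k hk
      simp only [Finset.mem_range] at hk
      have h1 : k ≤ (i : ℕ) := by omega
      have h2 : k ≤ (j : ℕ) := by omega
      simp [h1, h2]; ring
    · intro k _ hk
      simp only [Finset.mem_range, not_lt] at hk
      have : ¬ (k ≤ (i : ℕ)) ∨ ¬ (k ≤ (j : ℕ)) := by omega
      rcases this with h | h <;> simp [h]
  rw [hM, Matrix.det_mul, Matrix.det_mul, Matrix.det_transpose]
  have hdetA : A.det = ∏ i ∈ Finset.range n, ((p * i).choose i : R) := by
    rw [Matrix.det_of_lowerTriangular A (by
      intro i j hij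
      have h : (i : ℕ) < (j : ℕ) := hij
      simp only [hA, Matrix.of_apply]
      rw [if_neg (Nat.not_le.mpr h)])]
    rw [← Fin.prod_univ_eq_prod_range (fun i => ((p * i).choose i : R))]
    apply Finset.prod_congr rfl
    intro i _
    simp [hA]
  have hdetB : B.det = ∏ i ∈ Finset.range n, ((q * i).choose i : R) := by
    rw [Matrix.det_of_lowerTriangular B (by
      intro i j hij
      have h : (i : ℕ) < (j : ℕ) := hij
      simp only [hB, Matrix.of_apply]
      rw [if_neg (Nat.not_le.mpr h)])]
    rw [← Fin.prod_univ_eq_prod_range (fun i => ((q * i).choose i : R))]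
    apply Finset.prod_congr rfl
    intro i _
    simp [hB]
  have hdetD : D.det = z ^ n.choose 2 := by
    rw [hD, Matrix.det_diagonal, Finset.prod_pow_eq_pow_sum]
    congr 1
    rw [Fin.sum_univ_eq_sum_range (fun k => k)]
    have := Finset.sum_range_id_mul_two n
    rw [Nat.choose_two_right]
    omega
  rw [hdetA, hdetB, hdetD, Finset.prod_mul_distrib]
  ring
end

section
/- The determinant of the n×n matrix with (i,j)-entry ∑_{k=0}^{min(i,j)} C(i,k)·C(j,k)·z^k equals z^(n(n-1)/2). -/
/-!
The matrix factors as `P * diag(z^0, …, z^(n-1)) * Pᵀ`, where `P` is the lower unitriangular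
Pascal matrix `P i k = C(i, k)`; since `det P = 1`, the determinant is `z ^ (0 + 1 + ⋯ + (n-1))`.
-/

open Finset

namespace Matrix

variable {R : Type*} [CommRing R]

variable (R) in
def pascal (n : ℕ) : Matrix (Fin n) (Fin n) R :=
  of fun i j => ((i : ℕ).choose j : R)

theorem pascal_isLowerTriangular (n : ℕ) : (pascal R n).IsLowerTriangular := by
  intro i j hij
  have hij : (i : ℕ) < j := hij
  simp [pascal, Nat.choose_eq_zero_of_lt hij]

@[simp]
theorem det_pascal_s17 (n : ℕ) : (pascal R n).det = 1 := by
  rw [det_of_isLowerTriangular _ (pascal_isLowerTriangular n)]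
  simp [pascal]

theorem pascal_mul_diagonal_mul_pascal_transpose_apply {n : ℕ} (d : ℕ → R) (i j : Fin n) :
    (pascal R n * diagonal (fun k : Fin n => d k) * (pascal R n)ᵀ) i j =
      ∑ k ∈ range (min (i : ℕ) j + 1), ((i : ℕ).choose k : R) * ((j : ℕ).choose k : R) * d k := by
  simp only [mul_apply, diagonal_apply, transpose_apply, pascal, of_apply, mul_ite, mul_zero,
    sum_ite_eq', mem_univ, if_true]
  rw [Fin.sum_univ_eq_sum_range (fun k => ((i : ℕ).choose k : R) * d k * ((j : ℕ).choose k : R))]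
  symm
  refine sum_subset (fun k hk => ?_) (fun k _ hk => ?_) |>.trans (sum_congr rfl fun k _ => ?_)
  · simp only [mem_range] at hk ⊢
    omega
  · simp only [mem_range, not_lt, Nat.add_one_le_iff, min_lt_iff] at hk
    rcases hk with h | h <;> simp [Nat.choose_eq_zero_of_lt h]
  · ring

theorem det_of_sum_choose_mul_choose_mul (n : ℕ) (d : ℕ → R) :
    det (of fun i j : Fin n =>
        ∑ k ∈ range (min (i : ℕ) j + 1), ((i : ℕ).choose k : R) * ((j : ℕ).choose k : R) * d k) =
      ∏ i : Fin n, d i := by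
  have hfactor : (of fun i j : Fin n =>
      ∑ k ∈ range (min (i : ℕ) j + 1), ((i : ℕ).choose k : R) * ((j : ℕ).choose k : R) * d k) =
        pascal R n * diagonal (fun k : Fin n => d k) * (pascal R n)ᵀ := by
    ext i j
    rw [pascal_mul_diagonal_mul_pascal_transpose_apply, of_apply]
  rw [hfactor, det_mul, det_mul, det_transpose, det_pascal_s17, det_diagonal, one_mul, mul_one]

end Matrix

theorem Fin.sum_val_eq_choose_two (n : ℕ) : ∑ i : Fin n, (i : ℕ) = n.choose 2 := by
  rw [Fin.sum_univ_eq_sum_range (fun k => k), sum_range_id, Nat.choose_two_right]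

theorem det_delannoy_i_j_z {R : Type*} [CommRing R] (n : ℕ) (z : R) :
    Matrix.det (Matrix.of fun i j : Fin n =>
        ∑ k ∈ Finset.range (min (i : ℕ) (j : ℕ) + 1),
          ((i : ℕ).choose k : R) * ((j : ℕ).choose k : R) * z ^ k) =
      z ^ n.choose 2 := by
  rw [Matrix.det_of_sum_choose_mul_choose_mul n (z ^ ·), prod_pow_eq_pow_sum,
    Fin.sum_val_eq_choose_two]
end

section
/- The determinant of the n×n matrix with (i,j)-entry ∑_{k=0}^{min(i,j)} C(2i,k)·C(j,k) equals ∏_{i=0}^{n-1} C(2i,i) (the product of central binomial coefficients). -/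
theorem det_delannoy_2i_j (n : ℕ) :
    Matrix.det (Matrix.of fun i j : Fin n =>
        ∑ k ∈ Finset.range (min (i : ℕ) (j : ℕ) + 1),
          ((2 * (i : ℕ)).choose k : ℤ) * ((j : ℕ).choose k : ℤ)) =
      ∏ i ∈ Finset.range n, ((2 * i).choose i : ℤ) := by
  set A : Matrix (Fin n) (Fin n) ℤ := Matrix.of fun i k : Fin n =>
      if (k : ℕ) ≤ (i : ℕ) then ((2 * (i : ℕ)).choose k : ℤ) else 0 with hA
  set B : Matrix (Fin n) (Fin n) ℤ := Matrix.of fun k j : Fin n =>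
      if (k : ℕ) ≤ (j : ℕ) then (((j : ℕ)).choose k : ℤ) else 0 with hB
  have h : (Matrix.of fun i j : Fin n =>
        ∑ k ∈ Finset.range (min (i : ℕ) (j : ℕ) + 1),
          ((2 * (i : ℕ)).choose k : ℤ) * ((j : ℕ).choose k : ℤ)) = A * B := by
    ext i j
    simp only [Matrix.mul_apply, hA, hB, Matrix.of_apply]
    rw [Fin.sum_univ_eq_sum_range (fun k =>
      (if k ≤ (i : ℕ) then ((2 * (i : ℕ)).choose k : ℤ) else 0) *
      (if k ≤ (j : ℕ) then (((j : ℕ)).choose k : ℤ) else 0))]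
    have hsub : Finset.range (min (i : ℕ) (j : ℕ) + 1) ⊆ Finset.range n :=
      Finset.range_subset_range.2 (by have := i.isLt; omega)
    rw [← Finset.sum_subset hsub (fun k hk hk' => by
      simp only [Finset.mem_range] at hk hk'
      rcases le_or_gt k (i : ℕ) with h1 | h1
      · rw [if_neg (show ¬ k ≤ (j : ℕ) by omega), mul_zero]
      · rw [if_neg (show ¬ k ≤ (i : ℕ) by omega), zero_mul])]
    apply Finset.sum_congr rfl
    intro k hk
    simp only [Finset.mem_range] at hk
    rw [if_pos (by omega), if_pos (by omega)]
  have hAt : A.BlockTriangular OrderDual.toDual :=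
    fun i j hij => if_neg (by exact_mod_cast Nat.not_le.2 hij)
  have hBt : B.BlockTriangular id :=
    fun i j hij => if_neg (by exact_mod_cast Nat.not_le.2 hij)
  rw [h, Matrix.det_mul, Matrix.det_of_lowerTriangular A hAt,
    Matrix.det_of_upperTriangular hBt]
  simp only [hA, hB, Matrix.of_apply, le_refl, if_true, Nat.choose_self, Nat.cast_one]
  rw [Finset.prod_const_one, mul_one,
    Fin.prod_univ_eq_prod_range (fun i => ((2 * i).choose i : ℤ))]
end

section
/- The q-analogue factorization: for functions a(i,k), b(j,k), f(k) into a commutative ring, if M is the n×n matrix with entries ∑_{k=0}^{min(i,j)} [ri choose k]_q [sj choose k]_q z^k (Gaussian binomial coefficients), then det M = z^(n(n-1)/2) · ∏_{i=0}^{n-1} [ri choose i]_q [si choose i]_q. -/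
/-- The Gaussian (q-binomial) coefficient `[m choose k]_q` as a polynomial in `q` with
integer coefficients, defined via the q-Pascal recurrence
`[m+1 choose k+1]_q = [m choose k]_q + q^(k+1) · [m choose k+1]_q`. -/
noncomputable def gaussBinomial : ℕ → ℕ → Polynomial ℤ
  | _, 0 => 1
  | 0, _ + 1 => 0
  | m + 1, k + 1 => gaussBinomial m k + Polynomial.X ^ (k + 1) * gaussBinomial m (k + 1)

theorem det_q_delannoy (n r s : ℕ) (hr : 0 < r) (hs : 0 < s) (z : Polynomial ℤ) :
    Matrix.det (Matrix.of fun i j : Fin n =>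
        ∑ k ∈ Finset.range (min (i : ℕ) (j : ℕ) + 1),
          gaussBinomial (r * (i : ℕ)) k * gaussBinomial (s * (j : ℕ)) k * z ^ k) =
      z ^ n.choose 2 *
        ∏ i ∈ Finset.range n, gaussBinomial (r * i) i * gaussBinomial (s * i) i := by
  set L : Matrix (Fin n) (Fin n) (Polynomial ℤ) :=
    Matrix.of fun i k : Fin n =>
      if (k : ℕ) ≤ (i : ℕ) then gaussBinomial (r * (i : ℕ)) k * z ^ (k : ℕ) else 0 with hL
  set U : Matrix (Fin n) (Fin n) (Polynomial ℤ) :=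
    Matrix.of fun k j : Fin n =>
      if (k : ℕ) ≤ (j : ℕ) then gaussBinomial (s * (j : ℕ)) k else 0 with hU
  have hfac : (Matrix.of fun i j : Fin n =>
        ∑ k ∈ Finset.range (min (i : ℕ) (j : ℕ) + 1),
          gaussBinomial (r * (i : ℕ)) k * gaussBinomial (s * (j : ℕ)) k * z ^ k) = L * U := by
    refine Matrix.ext fun i j => ?_
    rw [Matrix.mul_apply]
    simp only [Matrix.of_apply]
    have h1 : ∀ k : Fin n, L i k * U k j =
        (fun m : ℕ => if m ≤ min (i : ℕ) (j : ℕ) then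
          gaussBinomial (r * (i : ℕ)) m * gaussBinomial (s * (j : ℕ)) m * z ^ m else 0)
          (k : ℕ) := by
      intro k
      simp only [hL, hU, Matrix.of_apply]
      by_cases h : (k : ℕ) ≤ min (i : ℕ) (j : ℕ)
      · rw [if_pos (le_trans h (min_le_left _ _)), if_pos (le_trans h (min_le_right _ _)),
          if_pos h]
        ring
      · rw [if_neg h]
        by_cases hi : (k : ℕ) ≤ (i : ℕ)
        · rw [if_pos hi, if_neg (by omega)]
          rw [mul_zero]
        · rw [if_neg hi, zero_mul]
    rw [Finset.sum_congr rfl (fun k _ => h1 k),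
      Fin.sum_univ_eq_sum_range (fun m : ℕ => if m ≤ min (i : ℕ) (j : ℕ) then
        gaussBinomial (r * (i : ℕ)) m * gaussBinomial (s * (j : ℕ)) m * z ^ m else 0) n]
    rw [← Finset.sum_subset (Finset.range_subset_range.2
        (show min (i : ℕ) (j : ℕ) + 1 ≤ n by have := i.isLt; omega))
      (fun x _ hx => if_neg fun hc => hx (Finset.mem_range.2 (by omega)))]
    exact Finset.sum_congr rfl fun k hk =>
      (if_pos (Nat.lt_succ_iff.mp (Finset.mem_range.1 hk))).symm
  rw [hfac, Matrix.det_mul]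
  have hdetL : L.det = ∏ i : Fin n, (gaussBinomial (r * (i : ℕ)) i * z ^ (i : ℕ)) := by
    rw [Matrix.det_of_lowerTriangular L (fun i j hij => by
      have h2 : (i : ℕ) < (j : ℕ) := hij
      simp only [hL, Matrix.of_apply]
      rw [if_neg (Nat.not_le.2 h2)])]
    exact Finset.prod_congr rfl fun i _ => by simp [hL]
  have hdetU : U.det = ∏ i : Fin n, gaussBinomial (s * (i : ℕ)) i := by
    rw [Matrix.det_of_upperTriangular (show U.BlockTriangular id from fun i j hij => by
      have h2 : (j : ℕ) < (i : ℕ) := hij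
      simp only [hU, Matrix.of_apply]
      rw [if_neg (Nat.not_le.2 h2)])]
    exact Finset.prod_congr rfl fun i _ => by simp [hU]
  rw [hdetL, hdetU, Finset.prod_mul_distrib, Finset.prod_pow_eq_pow_sum]
  have hc : ∑ i : Fin n, (i : ℕ) = n.choose 2 := by
    rw [Fin.sum_univ_eq_sum_range (fun i => i) n, Finset.sum_range_id, Nat.choose_two_right]
  rw [hc, Fin.prod_univ_eq_prod_range (fun i => gaussBinomial (r * i) i),
    Fin.prod_univ_eq_prod_range (fun i => gaussBinomial (s * i) i), Finset.prod_mul_distrib]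
  ring
end
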